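/- arXiv:2102.10715 — 2 statements merged into one kernel-verified Lean document; each statement's English description precedes it below -/
import Mathlib

section
/- Let τ > 3/2 and choose a with 1 < a < 2τ - 1. Then for ε ∈ (0,1/2) and ρ > 0, ∫_1^{ε⁻¹/2} z^{2τ-2}(z² + 1 + (ρ(1-εz)/(1-ε²))²)^{-2τ+1} dz ≤ C ρ^{-2τ+a} ∫_1^∞ z^{-a} dz ≤ C' ρ^{-2τ+a}, where C, C' depend only on τ and a. In particular this bound tends to 0 as ρ → ∞. -/
open Real Filter Topology intervalIntegral

noncomputable section

/-- `ξ = ρ(1-εz)/(1-ε²)`. -/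
def edgeProfile (ε ρ z : ℝ) : ℝ := ρ * (1 - ε * z) / (1 - ε ^ 2)

/-- The part `[1, ε⁻¹/2]` of the slanted-edge integral: for `τ > 3/2` and
`1 < a < 2τ - 1`, there are constants `C, C'` depending only on `τ` and `a` with
`∫_1^{ε⁻¹/2} z^{2τ-2}(z²+1+(ρ(1-εz)/(1-ε²))²)^{-2τ+1} dz
  ≤ C ρ^{-2τ+a} ∫_1^∞ z^{-a} dz ≤ C' ρ^{-2τ+a}`;
in particular the bound tends to `0` as `ρ → ∞`. -/
theorem lower_half_estimate (τ : ℝ) (hτ : 3 / 2 < τ) (a : ℝ) (ha : 1 < a)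
    (ha' : a < 2 * τ - 1) :
    ∃ C > 0, ∃ C' > 0,
      (∀ ε ∈ Set.Ioo (0:ℝ) (1 / 2), ∀ ρ > (0:ℝ),
        (∫ z in (1:ℝ)..(ε⁻¹ / 2), z ^ (2 * τ - 2) *
            (z ^ 2 + 1 + (edgeProfile ε ρ z) ^ 2) ^ (-2 * τ + 1))
          ≤ C * ρ ^ (-2 * τ + a) * ∫ z in Set.Ioi (1:ℝ), z ^ (-a) ∧
        C * ρ ^ (-2 * τ + a) * (∫ z in Set.Ioi (1:ℝ), z ^ (-a))
          ≤ C' * ρ ^ (-2 * τ + a)) ∧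
      Tendsto (fun ρ : ℝ => C' * ρ ^ (-2 * τ + a)) atTop (𝓝 0) := by
  have ha1 : 0 < a - 1 := by linarith
  have hIoi : (∫ z in Set.Ioi (1:ℝ), z ^ (-a)) = 1 / (a - 1) := by
    rw [integral_Ioi_rpow_of_lt (by linarith) one_pos]
    rw [Real.one_rpow, show (-a + 1 : ℝ) = -(a - 1) by ring]
    field_simp
  refine ⟨2 ^ (2 * τ - a), by positivity, 2 ^ (2 * τ - a) * (1 / (a - 1)), by positivity,
    fun ε hε ρ hρ => ⟨?_, by rw [hIoi]; exact le_of_eq (by ring)⟩, ?_⟩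
  · -- main estimate
    have hε0 : 0 < ε := hε.1
    have hε2 : ε < 1 / 2 := hε.2
    have hb : (1:ℝ) ≤ ε⁻¹ / 2 := by
      rw [le_div_iff₀ (by norm_num), one_mul, ← one_div]
      rw [le_div_iff₀ hε0]
      linarith
    have hint : MeasureTheory.IntegrableOn (fun z : ℝ => z ^ (-a)) (Set.Ioi (1:ℝ)) :=
      integrableOn_Ioi_rpow_of_lt (show -a < -1 by linarith) one_pos
    set b := ε⁻¹ / 2 with hbdef
    -- pointwise bound on Icc 1 b
    have key : ∀ z ∈ Set.Icc (1:ℝ) b,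
        z ^ (2 * τ - 2) * (z ^ 2 + 1 + (edgeProfile ε ρ z) ^ 2) ^ (-2 * τ + 1)
          ≤ 2 ^ (2 * τ - a) * ρ ^ (-2 * τ + a) * z ^ (-a) := by
      intro z hz
      obtain ⟨hz1, hzb⟩ := hz
      have hz0 : 0 < z := lt_of_lt_of_le one_pos hz1
      have hεz : ε * z ≤ 1 / 2 := by
        calc ε * z ≤ ε * b := by nlinarith
        _ = 1 / 2 := by rw [hbdef, mul_div_assoc', mul_inv_cancel₀ hε0.ne']
      have hξ : ρ / 2 ≤ edgeProfile ε ρ z := by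
        have h1 : (0:ℝ) < 1 - ε ^ 2 := by nlinarith
        have h2 : 1 - ε ^ 2 ≤ 1 := by nlinarith
        have h3 : ρ * (1 / 2) ≤ ρ * (1 - ε * z) := by nlinarith
        rw [edgeProfile, le_div_iff₀ h1]
        nlinarith
      set B := z ^ 2 + 1 + (edgeProfile ε ρ z) ^ 2 with hB
      have hBz : z ^ 2 ≤ B := by nlinarith [sq_nonneg (edgeProfile ε ρ z)]
      have hBρ : (ρ / 2) ^ 2 ≤ B := by nlinarith [sq_nonneg z]
      have hB0 : (0:ℝ) < B := by nlinarith
      have hsplit : B ^ (-2 * τ + 1)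
          = B ^ (-(2 * τ - 2 + a) / 2) * B ^ ((a - 2 * τ) / 2) := by
        rw [← Real.rpow_add hB0]; ring_nf
      have e1 : B ^ (-(2 * τ - 2 + a) / 2) ≤ (z ^ 2) ^ (-(2 * τ - 2 + a) / 2) :=
        Real.rpow_le_rpow_of_nonpos (by positivity) hBz (by linarith)
      have e2 : B ^ ((a - 2 * τ) / 2) ≤ ((ρ / 2) ^ 2) ^ ((a - 2 * τ) / 2) :=
        Real.rpow_le_rpow_of_nonpos (by positivity) hBρ (by linarith)
      have hz2 : (z ^ 2) ^ (-(2 * τ - 2 + a) / 2) = z ^ (-(2 * τ - 2 + a)) := by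
        rw [← Real.rpow_natCast z 2, ← Real.rpow_mul hz0.le]; congr 1; push_cast; ring
      have hρ2 : ((ρ / 2) ^ 2) ^ ((a - 2 * τ) / 2) = (ρ / 2) ^ (a - 2 * τ) := by
        rw [← Real.rpow_natCast (ρ / 2) 2, ← Real.rpow_mul (by positivity)]; congr 1
        push_cast; ring
      have hdiv : (ρ / 2) ^ (a - 2 * τ) = 2 ^ (2 * τ - a) * ρ ^ (a - 2 * τ) := by
        rw [Real.div_rpow hρ.le (by norm_num), div_eq_mul_inv, ← Real.rpow_neg (by norm_num)]
        ring_nf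
      calc z ^ (2 * τ - 2) * B ^ (-2 * τ + 1)
          = z ^ (2 * τ - 2) * (B ^ (-(2 * τ - 2 + a) / 2) * B ^ ((a - 2 * τ) / 2)) := by
            rw [hsplit]
        _ ≤ z ^ (2 * τ - 2) * ((z ^ 2) ^ (-(2 * τ - 2 + a) / 2)
              * ((ρ / 2) ^ 2) ^ ((a - 2 * τ) / 2)) := by
            apply mul_le_mul_of_nonneg_left _ (Real.rpow_nonneg hz0.le _)
            exact mul_le_mul e1 e2 (Real.rpow_nonneg hB0.le _) (Real.rpow_nonneg (by positivity) _)
        _ = 2 ^ (2 * τ - a) * ρ ^ (-2 * τ + a) * z ^ (-a) := by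
            rw [hz2, hρ2, hdiv,
              show (-a : ℝ) = (2 * τ - 2) + -(2 * τ - 2 + a) by ring, Real.rpow_add hz0,
              show (a - 2 * τ : ℝ) = -2 * τ + a by ring]
            ring
    -- integrability of f on [1,b]
    have hcont : ContinuousOn (fun z : ℝ => z ^ (2 * τ - 2) *
        (z ^ 2 + 1 + (edgeProfile ε ρ z) ^ 2) ^ (-2 * τ + 1)) (Set.Icc 1 b) := by
      apply ContinuousOn.mul
      · exact fun z hz => (Real.continuousAt_rpow_const z _
          (Or.inl (by linarith [hz.1]))).continuousWithinAt
      · apply ContinuousOn.rpow_const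
        · apply ContinuousOn.add
          apply ContinuousOn.add
          · fun_prop
          · fun_prop
          · apply ContinuousOn.pow
            unfold edgeProfile
            fun_prop
        · intro z hz
          left
          have := sq_nonneg (edgeProfile ε ρ z)
          have := hz.1
          nlinarith
    have hintf : IntervalIntegrable (fun z : ℝ => z ^ (2 * τ - 2) *
        (z ^ 2 + 1 + (edgeProfile ε ρ z) ^ 2) ^ (-2 * τ + 1)) MeasureTheory.volume 1 b := by
      apply ContinuousOn.intervalIntegrable
      rwa [Set.uIcc_of_le hb]
    have hintg : IntervalIntegrable (fun z : ℝ => 2 ^ (2 * τ - a) * ρ ^ (-2 * τ + a) * z ^ (-a))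
        MeasureTheory.volume 1 b := by
      apply IntervalIntegrable.const_mul
      apply ContinuousOn.intervalIntegrable
      apply ContinuousOn.rpow_const (by fun_prop)
      intro z hz
      rw [Set.uIcc_of_le hb] at hz
      exact Or.inl (by linarith [hz.1])
    calc (∫ z in (1:ℝ)..b, z ^ (2 * τ - 2) *
            (z ^ 2 + 1 + (edgeProfile ε ρ z) ^ 2) ^ (-2 * τ + 1))
        ≤ ∫ z in (1:ℝ)..b, 2 ^ (2 * τ - a) * ρ ^ (-2 * τ + a) * z ^ (-a) :=
          intervalIntegral.integral_mono_on hb hintf hintg key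
      _ = 2 ^ (2 * τ - a) * ρ ^ (-2 * τ + a) * ∫ z in (1:ℝ)..b, z ^ (-a) := by
          rw [intervalIntegral.integral_const_mul]
      _ ≤ 2 ^ (2 * τ - a) * ρ ^ (-2 * τ + a) * ∫ z in Set.Ioi (1:ℝ), z ^ (-a) := by
          apply mul_le_mul_of_nonneg_left _ (by positivity)
          rw [intervalIntegral.integral_of_le hb]
          apply MeasureTheory.setIntegral_mono_set hint
          · filter_upwards [MeasureTheory.ae_restrict_mem measurableSet_Ioi] with x hx
            exact Real.rpow_nonneg (le_of_lt (lt_trans one_pos hx)) _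
          · exact HasSubset.Subset.eventuallyLE Set.Ioc_subset_Ioi_self
  · have h0 : Tendsto (fun ρ : ℝ => ρ ^ (-(2 * τ - a))) atTop (𝓝 0) :=
      tendsto_rpow_neg_atTop (by linarith)
    have h1 : ∀ x : ℝ, x ^ (-2 * τ + a) = x ^ (-(2 * τ - a)) := fun x => by congr 1; ring
    simp only [h1]
    simpa using h0.const_mul (2 ^ (2 * τ - a) * (1 / (a - 1)))
end
end

section
/- Let τ > 3/2 and r the hyperbolic distance to o = (0,0,1). Consider the slanted side face S = {(ξ(z)cos(π/n), y, z) : |y| ≤ ξ(z)sin(π/n), z ∈ [ε, ε⁻¹]} where ξ(z) = ρ(1-εz)/(1-ε²). If ρ = ρ(ε) → ∞ and ρ(ε) = o(ε^{-2τ}) as ε → 0, then ∫_S cosh^{-2τ+1}(r) dσ̄ → 0 as ε → 0, where dσ̄ is the hyperbolic area element on S. -/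
open Real Filter Topology intervalIntegral

noncomputable section

/-- `cosh r` where `r` is hyperbolic distance from `(x,y,z)` to `o = (0,0,1)`:
`2 cosh r = (x²+y²+z²+1)/z`. -/
def coshR (x y z : ℝ) : ℝ := (x ^ 2 + y ^ 2 + z ^ 2 + 1) / (2 * z)

lemma coshR_pos {x y z : ℝ} (hz : 0 < z) : 0 < coshR x y z := by
  unfold coshR; positivity

lemma le_coshR_self {x y z : ℝ} (hz : 0 < z) : x ≤ coshR x y z := by
  rw [coshR, le_div_iff₀ (by positivity)]; nlinarith [sq_nonneg (x - z), sq_nonneg y]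

lemma half_z_le_coshR {x y z : ℝ} (hz : 0 < z) : z / 2 ≤ coshR x y z := by
  rw [coshR, le_div_iff₀ (by positivity)]; nlinarith [sq_nonneg x, sq_nonneg y]

lemma inv_le_coshR {x y z : ℝ} (hz : 0 < z) : 1 / (2 * z) ≤ coshR x y z := by
  rw [coshR, div_le_div_iff₀ (by positivity) (by positivity)]
  nlinarith [sq_nonneg x, sq_nonneg y, sq_nonneg z]

lemma sq_div_le_coshR {x y z : ℝ} (hz : 0 < z) : x ^ 2 / (2 * z) ≤ coshR x y z := by
  rw [coshR, div_le_div_iff₀ (by positivity) (by positivity)]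
  nlinarith [sq_nonneg y, sq_nonneg z]

lemma coshR_mono_y {x y z : ℝ} (hz : 0 < z) : coshR x 0 z ≤ coshR x y z := by
  unfold coshR
  rw [div_le_div_iff_of_pos_right (by positivity)]
  nlinarith [sq_nonneg y]

lemma rpow_decomp {a u v q r : ℝ} (hu : 0 < u) (hv : 0 < v) (hau : u ≤ a) (hav : v ≤ a)
    (hq : q ≤ 0) (hr : r ≤ 0) : a ^ (q + r) ≤ u ^ q * v ^ r := by
  have ha : 0 < a := lt_of_lt_of_le hu hau
  rw [Real.rpow_add ha]
  exact mul_le_mul (Real.rpow_le_rpow_of_nonpos hu hau hq)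
    (Real.rpow_le_rpow_of_nonpos hv hav hr) (Real.rpow_nonneg ha.le r) (Real.rpow_nonneg hu.le q)

lemma inner_nonneg {x z A p : ℝ} (hz : 0 < z) (hA : 0 ≤ A) :
    0 ≤ ∫ y in (-A)..A, coshR x y z ^ p :=
  intervalIntegral.integral_nonneg (by linarith) fun u _ => Real.rpow_nonneg (coshR_pos hz).le p

lemma coshR_continuous_y {x z p : ℝ} (hz : 0 < z) :
    Continuous fun y : ℝ => coshR x y z ^ p := by
  apply Continuous.rpow_const
  · unfold coshR; fun_prop
  · exact fun y => Or.inl (ne_of_gt (coshR_pos hz))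

lemma inner_integral_le {x z A p : ℝ} (hz : 0 < z) (hA : 0 ≤ A) (hp : p ≤ 0) :
    (∫ y in (-A)..A, coshR x y z ^ p) ≤ 2 * A * coshR x 0 z ^ p := by
  have h1 : (∫ y in (-A)..A, coshR x y z ^ p) ≤ ∫ _y in (-A)..A, coshR x 0 z ^ p := by
    apply intervalIntegral.integral_mono_on (by linarith)
      ((coshR_continuous_y hz).intervalIntegrable _ _) intervalIntegrable_const
    intro y _
    exact Real.rpow_le_rpow_of_nonpos (coshR_pos hz) (coshR_mono_y hz) hp
  rw [intervalIntegral.integral_const] at h1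
  calc _ ≤ _ := h1
    _ = 2 * A * coshR x 0 z ^ p := by rw [smul_eq_mul]; ring

lemma eq_of_log_eq' {x y : ℝ} (hx : 0 < x) (hy : 0 < y) (h : Real.log x = Real.log y) : x = y :=
  Real.log_injOn_pos (Set.mem_Ioi.mpr hx) (Set.mem_Ioi.mpr hy) h

lemma inv_sq_eq_rpow {z : ℝ} (hz : 0 < z) : (z ^ 2)⁻¹ = z ^ (-2 : ℝ) := by
  rw [show (-2 : ℝ) = ((-2 : ℤ) : ℝ) by norm_num, Real.rpow_intCast]
  rw [zpow_neg]
  norm_cast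

lemma regionE1 {τ z r : ℝ} (hz : 0 < z) (hr : 0 < r) :
    4 * ((r ^ 2 / (32 * z)) ^ (3 / 4 - τ) * (1 / (2 * z)) ^ (5 / 4 - τ)) * (z ^ 2)⁻¹
      = (4 * 32 ^ (τ - 3 / 4) * 2 ^ (τ - 5 / 4)) * r ^ (3 / 2 - 2 * τ) * z ^ (2 * τ - 4) := by
  apply eq_of_log_eq' (by positivity) (by positivity)
  simp (disch := positivity) only [Real.log_mul, Real.log_rpow, Real.log_div, Real.log_inv,
    Real.log_pow, one_div, Real.log_one]
  push_cast
  ring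

lemma regionE2 {τ z r : ℝ} (hz : 0 < z) (hr : 0 < r) :
    4 * ((r ^ 2 / (32 * z)) ^ (3 / 4 - τ) * (z / 2) ^ (5 / 4 - τ)) * (z ^ 2)⁻¹
      = (4 * 32 ^ (τ - 3 / 4) * 2 ^ (τ - 5 / 4)) * r ^ (3 / 2 - 2 * τ) * z ^ (-3 / 2 : ℝ) := by
  apply eq_of_log_eq' (by positivity) (by positivity)
  simp (disch := positivity) only [Real.log_mul, Real.log_rpow, Real.log_div, Real.log_inv,
    Real.log_pow, one_div, Real.log_one]
  push_cast
  ring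

lemma regionE3 {τ ε : ℝ} (hε : 0 < ε) :
    ((4 * ε)⁻¹) ^ (2 - 2 * τ) = 4 ^ (2 * τ - 2) * ε ^ (2 * τ - 2) := by
  apply eq_of_log_eq' (by positivity) (by positivity)
  simp (disch := positivity) only [Real.log_mul, Real.log_rpow, Real.log_inv, Real.log_one]
  ring

lemma inner_continuousOn (τ c s ε r : ℝ) (hε0 : 0 < ε) :
    ContinuousOn (fun z => ∫ y in (-(edgeProfile ε r z * s))..(edgeProfile ε r z * s),
      coshR (edgeProfile ε r z * c) y z ^ (-2 * τ + 1)) (Set.Icc ε ε⁻¹) := by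
  set A : ℝ → ℝ := fun z => edgeProfile ε r z * s with hA_def
  have hA : Continuous A := by unfold A; unfold edgeProfile; fun_prop
  set g : ℝ → ℝ → ℝ := fun z y =>
    (((edgeProfile ε r z * c) ^ 2 + y ^ 2 + z ^ 2 + 1) / (2 * max z ε)) ^ (-2 * τ + 1) with hg_def
  have hmax : ∀ q : ℝ × ℝ, 0 < max q.1 ε := fun q => lt_max_of_lt_right hε0
  have hg : Continuous (Function.uncurry g) := by
    apply Continuous.rpow_const
    · apply Continuous.div
      · unfold edgeProfile; fun_prop
      · fun_prop
      · intro q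
        have := hmax q
        positivity
    · intro q
      have := hmax q
      have : 0 < ((edgeProfile ε r q.1 * c) ^ 2 + q.2 ^ 2 + q.1 ^ 2 + 1) / (2 * max q.1 ε) := by
        positivity
      exact Or.inl (ne_of_gt this)
  have hF : Continuous fun z => (∫ y in (0:ℝ)..(A z), g z y) - ∫ y in (0:ℝ)..(-(A z)), g z y :=
    (intervalIntegral.continuous_parametric_intervalIntegral_of_continuous hg hA).sub
      (intervalIntegral.continuous_parametric_intervalIntegral_of_continuous hg hA.neg)
  apply hF.continuousOn.congr
  intro z hz
  obtain ⟨hz1, hz2⟩ := hz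
  have hzpos : 0 < z := lt_of_lt_of_le hε0 hz1
  have hgz : (fun y => coshR (edgeProfile ε r z * c) y z ^ (-2 * τ + 1)) = g z := by
    funext y
    simp only [hg_def, coshR, max_eq_left hz1]
  have hcont : Continuous (g z) := by
    rw [← hgz]; exact coshR_continuous_y hzpos
  have h1 : IntervalIntegrable (g z) MeasureTheory.volume (-(A z)) 0 :=
    hcont.intervalIntegrable _ _
  have h2 : IntervalIntegrable (g z) MeasureTheory.volume 0 (A z) :=
    hcont.intervalIntegrable _ _
  calc (∫ y in (-(A z))..(A z), coshR (edgeProfile ε r z * c) y z ^ (-2 * τ + 1))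
      = ∫ y in (-(A z))..(A z), g z y := by rw [hgz]
    _ = (∫ y in (-(A z))..(0:ℝ), g z y) + ∫ y in (0:ℝ)..(A z), g z y :=
        (intervalIntegral.integral_add_adjacent_intervals h1 h2).symm
    _ = (∫ y in (0:ℝ)..(A z), g z y) - ∫ y in (0:ℝ)..(-(A z)), g z y := by
        rw [intervalIntegral.integral_symm (0:ℝ) (-(A z))]
        ring

lemma inner_core_bound {τ c s z X u v : ℝ} (hτ : 3 / 2 < τ) (hc : 1 / 2 ≤ c)
    (hs0 : 0 ≤ s) (hs1 : s ≤ 1) (hz : 0 < z) (hX : 0 < X) (hu : 0 < u) (hv : 0 < v)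
    (hua : u ≤ coshR (X * c) 0 z) (hva : v ≤ coshR (X * c) 0 z) :
    (∫ y in (-(X * s))..(X * s), coshR (X * c) y z ^ (-2 * τ + 1))
      ≤ 4 * (u ^ (3 / 4 - τ) * v ^ (5 / 4 - τ)) := by
  have hcpos : 0 < c := by linarith
  have hXc : 0 < X * c := by positivity
  set a : ℝ := coshR (X * c) 0 z with ha_def
  have ha : 0 < a := coshR_pos hz
  have haXc : X * c ≤ a := le_coshR_self hz
  have step1 : (∫ y in (-(X * s))..(X * s), coshR (X * c) y z ^ (-2 * τ + 1))
      ≤ 2 * (X * s) * a ^ (-2 * τ + 1) :=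
    inner_integral_le hz (by positivity) (by linarith)
  have step2 : a ^ (-2 * τ + 1) = a⁻¹ * a ^ (2 - 2 * τ) := by
    rw [show (-2 * τ + 1 : ℝ) = (-1) + (2 - 2 * τ) by ring, Real.rpow_add ha,
      Real.rpow_neg_one]
  have h3 : 2 * (X * s) * a⁻¹ ≤ 4 := by
    have hinv : a⁻¹ ≤ (X * c)⁻¹ := inv_anti₀ hXc haXc
    have hcinv : c⁻¹ ≤ 2 := by
      rw [show (2 : ℝ) = (1 / 2)⁻¹ by norm_num]
      exact inv_anti₀ (by norm_num) hc
    have h5 : 2 * (X * s) * a⁻¹ ≤ 2 * (X * s) * (X * c)⁻¹ :=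
      mul_le_mul_of_nonneg_left hinv (by positivity)
    have h6 : 2 * (X * s) * (X * c)⁻¹ = 2 * s * c⁻¹ * (X * X⁻¹) := by
      rw [mul_inv]; ring
    rw [mul_inv_cancel₀ hX.ne'] at h6
    have : 0 ≤ c⁻¹ := by positivity
    nlinarith
  have h2 : a ^ (2 - 2 * τ) ≤ u ^ (3 / 4 - τ) * v ^ (5 / 4 - τ) := by
    rw [show (2 - 2 * τ : ℝ) = (3 / 4 - τ) + (5 / 4 - τ) by ring]
    exact rpow_decomp hu hv hua hva (by linarith) (by linarith)
  calc (∫ y in (-(X * s))..(X * s), coshR (X * c) y z ^ (-2 * τ + 1))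
      ≤ 2 * (X * s) * a ^ (-2 * τ + 1) := step1
    _ = (2 * (X * s) * a⁻¹) * a ^ (2 - 2 * τ) := by rw [step2]; ring
    _ ≤ 4 * (u ^ (3 / 4 - τ) * v ^ (5 / 4 - τ)) :=
        mul_le_mul h3 h2 (Real.rpow_nonneg ha.le _) (by norm_num)

lemma inner_core_bound3 {τ c s z X w : ℝ} (hτ : 3 / 2 < τ) (hc : 1 / 2 ≤ c)
    (hs0 : 0 ≤ s) (hs1 : s ≤ 1) (hz : 0 < z) (hX : 0 ≤ X) (hw : 0 < w)
    (hwa : w ≤ coshR (X * c) 0 z) :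
    (∫ y in (-(X * s))..(X * s), coshR (X * c) y z ^ (-2 * τ + 1)) ≤ 4 * w ^ (2 - 2 * τ) := by
  rcases hX.eq_or_lt with h0 | hXpos
  · rw [← h0]
    simp only [zero_mul, neg_zero, intervalIntegral.integral_same]
    positivity
  · have hcpos : 0 < c := by linarith
    have hXc : 0 < X * c := by positivity
    set a : ℝ := coshR (X * c) 0 z with ha_def
    have ha : 0 < a := coshR_pos hz
    have haXc : X * c ≤ a := le_coshR_self hz
    have step1 : (∫ y in (-(X * s))..(X * s), coshR (X * c) y z ^ (-2 * τ + 1))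
        ≤ 2 * (X * s) * a ^ (-2 * τ + 1) :=
      inner_integral_le hz (by positivity) (by linarith)
    have step2 : a ^ (-2 * τ + 1) = a⁻¹ * a ^ (2 - 2 * τ) := by
      rw [show (-2 * τ + 1 : ℝ) = (-1) + (2 - 2 * τ) by ring, Real.rpow_add ha,
        Real.rpow_neg_one]
    have h3 : 2 * (X * s) * a⁻¹ ≤ 4 := by
      have hinv : a⁻¹ ≤ (X * c)⁻¹ := inv_anti₀ hXc haXc
      have hcinv : c⁻¹ ≤ 2 := by
        rw [show (2 : ℝ) = (1 / 2)⁻¹ by norm_num]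
        exact inv_anti₀ (by norm_num) hc
      have h5 : 2 * (X * s) * a⁻¹ ≤ 2 * (X * s) * (X * c)⁻¹ :=
        mul_le_mul_of_nonneg_left hinv (by positivity)
      have h6 : 2 * (X * s) * (X * c)⁻¹ = 2 * s * c⁻¹ * (X * X⁻¹) := by
        rw [mul_inv]; ring
      rw [mul_inv_cancel₀ hXpos.ne'] at h6
      have : 0 ≤ c⁻¹ := by positivity
      nlinarith
    have h2 : a ^ (2 - 2 * τ) ≤ w ^ (2 - 2 * τ) :=
      Real.rpow_le_rpow_of_nonpos hw hwa (by linarith)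
    calc (∫ y in (-(X * s))..(X * s), coshR (X * c) y z ^ (-2 * τ + 1))
        ≤ 2 * (X * s) * a ^ (-2 * τ + 1) := step1
      _ = (2 * (X * s) * a⁻¹) * a ^ (2 - 2 * τ) := by rw [step2]; ring
      _ ≤ 4 * w ^ (2 - 2 * τ) :=
          mul_le_mul h3 h2 (Real.rpow_nonneg ha.le _) (by norm_num)

lemma main_nonneg {τ c s ε r : ℝ} (hε0 : 0 < ε) (hε1 : ε < 1) (hr : 0 < r) (hs0 : 0 ≤ s) :
    0 ≤ ∫ z in ε..ε⁻¹,
      (∫ y in (-(edgeProfile ε r z * s))..(edgeProfile ε r z * s),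
        coshR (edgeProfile ε r z * c) y z ^ (-2 * τ + 1)) * (z ^ 2)⁻¹
        * Real.sqrt (1 + ε ^ 2 * r ^ 2 / (1 - ε ^ 2) ^ 2) := by
  have hee : ε * ε⁻¹ = 1 := mul_inv_cancel₀ hε0.ne'
  have hεinvpos : 0 < ε⁻¹ := inv_pos.mpr hε0
  have hεinv1 : (1:ℝ) ≤ ε⁻¹ := by nlinarith
  have hden : 0 < 1 - ε ^ 2 := by nlinarith
  apply intervalIntegral.integral_nonneg (by linarith)
  intro u hu
  have hu0 : 0 < u := lt_of_lt_of_le hε0 hu.1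
  have hξ : 0 ≤ edgeProfile ε r u := by
    have hεu : ε * u ≤ 1 := by
      have := mul_le_mul_of_nonneg_left hu.2 hε0.le
      nlinarith
    apply div_nonneg _ hden.le
    nlinarith
  exact mul_nonneg (mul_nonneg (inner_nonneg hu0 (mul_nonneg hξ hs0)) (by positivity))
    (Real.sqrt_nonneg _)

set_option maxHeartbeats 2000000 in
lemma main_bound {τ c s ε r : ℝ} (hτ : 3 / 2 < τ) (hc : 1 / 2 ≤ c) (hc1 : c ≤ 1)
    (hs0 : 0 ≤ s) (hs1 : s ≤ 1) (hε0 : 0 < ε) (hε2 : ε ≤ 1 / 2) (hr : 0 < r) :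
    (∫ z in ε..ε⁻¹,
        (∫ y in (-(edgeProfile ε r z * s))..(edgeProfile ε r z * s),
          coshR (edgeProfile ε r z * c) y z ^ (-2 * τ + 1)) * (z ^ 2)⁻¹
          * Real.sqrt (1 + ε ^ 2 * r ^ 2 / (1 - ε ^ 2) ^ 2))
    ≤ (1 + 2 * ε * r) *
        ((4 * 32 ^ (τ - 3 / 4) * 2 ^ (τ - 5 / 4) * (1 / (2 * τ - 3) + 2)) * r ^ (3 / 2 - 2 * τ)
          + 4 * 4 ^ (2 * τ - 2) * ε ^ (2 * τ - 1)) := by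
  have hε1 : ε < 1 := by linarith
  have hden : 0 < 1 - ε ^ 2 := by nlinarith
  have hee : ε * ε⁻¹ = 1 := mul_inv_cancel₀ hε0.ne'
  have hεinvpos : 0 < ε⁻¹ := inv_pos.mpr hε0
  have hεinv2 : (2 : ℝ) ≤ ε⁻¹ := by nlinarith
  have hεle1 : ε ≤ 1 := by linarith
  have h1le : (1 : ℝ) ≤ ε⁻¹ / 2 := by linarith
  have hhalf : ε⁻¹ / 2 ≤ ε⁻¹ := by linarith
  have hεinv1 : (1 : ℝ) ≤ ε⁻¹ := by linarith
  have h2τ3 : 0 < 2 * τ - 3 := by linarith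
  set M : ℝ := Real.sqrt (1 + ε ^ 2 * r ^ 2 / (1 - ε ^ 2) ^ 2) with hM_def
  have hM0 : 0 ≤ M := Real.sqrt_nonneg _
  have hM : M ≤ 1 + 2 * ε * r := by
    rw [hM_def]
    have key : 1 + ε ^ 2 * r ^ 2 / (1 - ε ^ 2) ^ 2 ≤ (1 + 2 * ε * r) ^ 2 := by
      have h1 : (1 : ℝ) ≤ 4 * (1 - ε ^ 2) ^ 2 := by nlinarith
      have h2 : ε ^ 2 * r ^ 2 / (1 - ε ^ 2) ^ 2 ≤ 4 * (ε ^ 2 * r ^ 2) := by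
        rw [div_le_iff₀ (by positivity)]
        nlinarith [mul_le_mul_of_nonneg_left h1 (show (0:ℝ) ≤ ε ^ 2 * r ^ 2 by positivity)]
      nlinarith [mul_nonneg (mul_nonneg (show (0:ℝ) ≤ 2 by norm_num) hε0.le) hr.le]
    calc Real.sqrt (1 + ε ^ 2 * r ^ 2 / (1 - ε ^ 2) ^ 2)
        ≤ Real.sqrt ((1 + 2 * ε * r) ^ 2) := Real.sqrt_le_sqrt key
      _ = 1 + 2 * ε * r := Real.sqrt_sq (by positivity)
  have hξ_lb : ∀ z : ℝ, z ≤ ε⁻¹ / 2 → r / 2 ≤ edgeProfile ε r z := by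
    intro z hzle
    have hεz : ε * z ≤ 1 / 2 := by
      have := mul_le_mul_of_nonneg_left hzle hε0.le
      nlinarith
    rw [edgeProfile, le_div_iff₀ hden]
    nlinarith
  have hξ_nonneg : ∀ z : ℝ, z ≤ ε⁻¹ → 0 ≤ edgeProfile ε r z := by
    intro z hzle
    have hεz : ε * z ≤ 1 := by
      have := mul_le_mul_of_nonneg_left hzle hε0.le
      nlinarith
    apply div_nonneg _ hden.le
    nlinarith
  set Φ : ℝ → ℝ := fun z =>
    (∫ y in (-(edgeProfile ε r z * s))..(edgeProfile ε r z * s),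
      coshR (edgeProfile ε r z * c) y z ^ (-2 * τ + 1)) * (z ^ 2)⁻¹ * M with hΦ_def
  have hφc : ContinuousOn Φ (Set.Icc ε ε⁻¹) := by
    apply ContinuousOn.mul _ continuousOn_const
    apply ContinuousOn.mul (inner_continuousOn τ c s ε r hε0)
    apply ContinuousOn.inv₀ ((continuous_pow 2).continuousOn)
    intro z hz
    exact pow_ne_zero 2 (ne_of_gt (lt_of_lt_of_le hε0 hz.1))
  have hsub1 : Set.uIcc ε 1 ⊆ Set.Icc ε ε⁻¹ := by
    rw [Set.uIcc_of_le hεle1]; exact Set.Icc_subset_Icc le_rfl hεinv1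
  have hsub2 : Set.uIcc 1 (ε⁻¹ / 2) ⊆ Set.Icc ε ε⁻¹ := by
    rw [Set.uIcc_of_le h1le]; exact Set.Icc_subset_Icc hεle1 hhalf
  have hsub3 : Set.uIcc (ε⁻¹ / 2) ε⁻¹ ⊆ Set.Icc ε ε⁻¹ := by
    rw [Set.uIcc_of_le hhalf]; exact Set.Icc_subset_Icc (by linarith) le_rfl
  have hint1 : IntervalIntegrable Φ MeasureTheory.volume ε 1 :=
    (hφc.mono hsub1).intervalIntegrable
  have hint2 : IntervalIntegrable Φ MeasureTheory.volume 1 (ε⁻¹ / 2) :=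
    (hφc.mono hsub2).intervalIntegrable
  have hint3 : IntervalIntegrable Φ MeasureTheory.volume (ε⁻¹ / 2) ε⁻¹ :=
    (hφc.mono hsub3).intervalIntegrable
  have hsplit : ∫ z in ε..ε⁻¹, Φ z
      = (∫ z in ε..(1:ℝ), Φ z) + ((∫ z in (1:ℝ)..(ε⁻¹ / 2), Φ z)
        + ∫ z in (ε⁻¹ / 2)..ε⁻¹, Φ z) := by
    rw [intervalIntegral.integral_add_adjacent_intervals hint2 hint3,
      intervalIntegral.integral_add_adjacent_intervals hint1 (hint2.trans hint3)]
  set K : ℝ := 4 * 32 ^ (τ - 3 / 4) * 2 ^ (τ - 5 / 4) with hK_def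
  have hKpos : 0 < K := by positivity
  have hrpow : 0 ≤ r ^ (3 / 2 - 2 * τ) := Real.rpow_nonneg hr.le _
  have hpt1 : ∀ z ∈ Set.Icc ε (1:ℝ), Φ z ≤ (K * r ^ (3 / 2 - 2 * τ) * M) * z ^ (2 * τ - 4) := by
    intro z hz
    have hz0 : 0 < z := lt_of_lt_of_le hε0 hz.1
    have hzle : z ≤ ε⁻¹ / 2 := le_trans hz.2 h1le
    set X : ℝ := edgeProfile ε r z with hX_def
    have hX : r / 2 ≤ X := hξ_lb z hzle
    have hXpos : 0 < X := by linarith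
    have hXc4 : r / 4 ≤ X * c := by nlinarith
    have hua : r ^ 2 / (32 * z) ≤ coshR (X * c) 0 z := by
      refine le_trans ?_ (sq_div_le_coshR hz0)
      rw [div_le_div_iff₀ (by positivity) (by positivity)]
      have hsq : r ^ 2 / 16 ≤ (X * c) ^ 2 := by nlinarith
      nlinarith [mul_le_mul_of_nonneg_right hsq hz0.le]
    have hcore := inner_core_bound hτ hc hs0 hs1 hz0 hXpos
      (show (0:ℝ) < r ^ 2 / (32 * z) by positivity)
      (show (0:ℝ) < 1 / (2 * z) by positivity) hua (inv_le_coshR hz0)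
    calc Φ z ≤ (4 * ((r ^ 2 / (32 * z)) ^ (3 / 4 - τ) * (1 / (2 * z)) ^ (5 / 4 - τ)))
          * (z ^ 2)⁻¹ * M := by
          apply mul_le_mul_of_nonneg_right _ hM0
          exact mul_le_mul_of_nonneg_right hcore (by positivity)
      _ = (K * r ^ (3 / 2 - 2 * τ) * z ^ (2 * τ - 4)) * M := by rw [regionE1 hz0 hr]
      _ = (K * r ^ (3 / 2 - 2 * τ) * M) * z ^ (2 * τ - 4) := by ring
  have hpt2 : ∀ z ∈ Set.Icc (1:ℝ) (ε⁻¹ / 2),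
      Φ z ≤ (K * r ^ (3 / 2 - 2 * τ) * M) * z ^ (-3 / 2 : ℝ) := by
    intro z hz
    have hz0 : 0 < z := lt_of_lt_of_le one_pos hz.1
    set X : ℝ := edgeProfile ε r z with hX_def
    have hX : r / 2 ≤ X := hξ_lb z hz.2
    have hXpos : 0 < X := by linarith
    have hXc4 : r / 4 ≤ X * c := by nlinarith
    have hua : r ^ 2 / (32 * z) ≤ coshR (X * c) 0 z := by
      refine le_trans ?_ (sq_div_le_coshR hz0)
      rw [div_le_div_iff₀ (by positivity) (by positivity)]
      have hsq : r ^ 2 / 16 ≤ (X * c) ^ 2 := by nlinarith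
      nlinarith [mul_le_mul_of_nonneg_right hsq hz0.le]
    have hcore := inner_core_bound hτ hc hs0 hs1 hz0 hXpos
      (show (0:ℝ) < r ^ 2 / (32 * z) by positivity)
      (show (0:ℝ) < z / 2 by positivity) hua (half_z_le_coshR hz0)
    calc Φ z ≤ (4 * ((r ^ 2 / (32 * z)) ^ (3 / 4 - τ) * (z / 2) ^ (5 / 4 - τ)))
          * (z ^ 2)⁻¹ * M := by
          apply mul_le_mul_of_nonneg_right _ hM0
          exact mul_le_mul_of_nonneg_right hcore (by positivity)
      _ = (K * r ^ (3 / 2 - 2 * τ) * z ^ (-3 / 2 : ℝ)) * M := by rw [regionE2 hz0 hr]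
      _ = (K * r ^ (3 / 2 - 2 * τ) * M) * z ^ (-3 / 2 : ℝ) := by ring
  have hpt3 : ∀ z ∈ Set.Icc (ε⁻¹ / 2) ε⁻¹,
      Φ z ≤ (4 * 4 ^ (2 * τ - 2) * ε ^ (2 * τ - 2) * M) * z ^ (-2 : ℝ) := by
    intro z hz
    have hz0 : 0 < z := lt_of_lt_of_le (by linarith) hz.1
    set X : ℝ := edgeProfile ε r z with hX_def
    have hX0 : 0 ≤ X := hξ_nonneg z hz.2
    have hwa : (4 * ε)⁻¹ ≤ coshR (X * c) 0 z := by
      refine le_trans ?_ (half_z_le_coshR hz0)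
      have h4e : (4 * ε)⁻¹ = ε⁻¹ / 4 := by
        rw [mul_inv]; ring
      rw [h4e]
      linarith [hz.1]
    have hcore := inner_core_bound3 hτ hc hs0 hs1 hz0 hX0
      (show (0:ℝ) < (4 * ε)⁻¹ by positivity) hwa
    rw [regionE3 hε0] at hcore
    calc Φ z ≤ (4 * (4 ^ (2 * τ - 2) * ε ^ (2 * τ - 2))) * (z ^ 2)⁻¹ * M := by
          apply mul_le_mul_of_nonneg_right _ hM0
          exact mul_le_mul_of_nonneg_right hcore (by positivity)
      _ = (4 * 4 ^ (2 * τ - 2) * ε ^ (2 * τ - 2) * M) * z ^ (-2 : ℝ) := by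
          rw [inv_sq_eq_rpow hz0]; ring
  have hrpow_cont : ∀ (q : ℝ) (A : ℝ) (a b : ℝ), ε ≤ a → a ≤ b →
      IntervalIntegrable (fun z : ℝ => A * z ^ q) MeasureTheory.volume a b := by
    intro q A a b ha hab
    apply ContinuousOn.intervalIntegrable
    apply ContinuousOn.mul continuousOn_const
    apply ContinuousOn.rpow_const continuousOn_id
    intro z hz
    rw [Set.uIcc_of_le hab] at hz
    exact Or.inl (ne_of_gt (lt_of_lt_of_le hε0 (le_trans ha hz.1)))
  have hI1 : ∫ z in ε..(1:ℝ), z ^ (2 * τ - 4) ≤ 1 / (2 * τ - 3) := by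
    rw [integral_rpow (Or.inl (by linarith))]
    rw [Real.one_rpow]
    rw [show (2 * τ - 4 + 1 : ℝ) = 2 * τ - 3 by ring]
    rw [div_le_div_iff_of_pos_right (by linarith)]
    linarith [Real.rpow_nonneg hε0.le (2 * τ - 3)]
  have hI2 : ∫ z in (1:ℝ)..(ε⁻¹ / 2), z ^ (-3 / 2 : ℝ) ≤ 2 := by
    rw [integral_rpow (Or.inr ⟨by norm_num, by
      rw [Set.uIcc_of_le h1le]
      rintro ⟨h, _⟩
      linarith⟩)]
    rw [Real.one_rpow]
    have h0 : 0 ≤ (ε⁻¹ / 2) ^ (-3 / 2 + 1 : ℝ) := Real.rpow_nonneg (by positivity) _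
    rw [div_le_iff_of_neg (by norm_num : (-3 / 2 + 1 : ℝ) < 0)]
    linarith
  have hI3 : ∫ z in (ε⁻¹ / 2)..ε⁻¹, z ^ (-2 : ℝ) ≤ ε := by
    rw [integral_rpow (Or.inr ⟨by norm_num, by
      rw [Set.uIcc_of_le hhalf]
      rintro ⟨h, _⟩
      linarith⟩)]
    rw [show (-2 + 1 : ℝ) = -1 by norm_num]
    rw [Real.rpow_neg_one, Real.rpow_neg_one]
    rw [inv_inv]
    have h2e : (ε⁻¹ / 2)⁻¹ = 2 * ε := by
      field_simp
    rw [h2e]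
    linarith [show (ε - 2 * ε) / (-1:ℝ) = ε from by ring]
  have hS1 : (∫ z in ε..(1:ℝ), Φ z) ≤ (K * r ^ (3 / 2 - 2 * τ) * M) * (1 / (2 * τ - 3)) := by
    calc (∫ z in ε..(1:ℝ), Φ z)
        ≤ ∫ z in ε..(1:ℝ), (K * r ^ (3 / 2 - 2 * τ) * M) * z ^ (2 * τ - 4) :=
          intervalIntegral.integral_mono_on hεle1 hint1 (hrpow_cont _ _ _ _ le_rfl hεle1) hpt1
      _ = (K * r ^ (3 / 2 - 2 * τ) * M) * ∫ z in ε..(1:ℝ), z ^ (2 * τ - 4) :=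
          intervalIntegral.integral_const_mul _ _
      _ ≤ (K * r ^ (3 / 2 - 2 * τ) * M) * (1 / (2 * τ - 3)) := by
          apply mul_le_mul_of_nonneg_left hI1 (by positivity)
  have hS2 : (∫ z in (1:ℝ)..(ε⁻¹ / 2), Φ z) ≤ (K * r ^ (3 / 2 - 2 * τ) * M) * 2 := by
    calc (∫ z in (1:ℝ)..(ε⁻¹ / 2), Φ z)
        ≤ ∫ z in (1:ℝ)..(ε⁻¹ / 2), (K * r ^ (3 / 2 - 2 * τ) * M) * z ^ (-3 / 2 : ℝ) :=
          intervalIntegral.integral_mono_on h1le hint2 (hrpow_cont _ _ _ _ hεle1 h1le) hpt2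
      _ = (K * r ^ (3 / 2 - 2 * τ) * M) * ∫ z in (1:ℝ)..(ε⁻¹ / 2), z ^ (-3 / 2 : ℝ) :=
          intervalIntegral.integral_const_mul _ _
      _ ≤ (K * r ^ (3 / 2 - 2 * τ) * M) * 2 := by
          apply mul_le_mul_of_nonneg_left hI2 (by positivity)
  have hS3 : (∫ z in (ε⁻¹ / 2)..ε⁻¹, Φ z) ≤ (4 * 4 ^ (2 * τ - 2) * ε ^ (2 * τ - 2) * M) * ε := by
    calc (∫ z in (ε⁻¹ / 2)..ε⁻¹, Φ z)
        ≤ ∫ z in (ε⁻¹ / 2)..ε⁻¹, (4 * 4 ^ (2 * τ - 2) * ε ^ (2 * τ - 2) * M) * z ^ (-2 : ℝ) :=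
          intervalIntegral.integral_mono_on hhalf hint3
            (hrpow_cont _ _ _ _ (by linarith) hhalf) hpt3
      _ = (4 * 4 ^ (2 * τ - 2) * ε ^ (2 * τ - 2) * M) * ∫ z in (ε⁻¹ / 2)..ε⁻¹, z ^ (-2 : ℝ) :=
          intervalIntegral.integral_const_mul _ _
      _ ≤ (4 * 4 ^ (2 * τ - 2) * ε ^ (2 * τ - 2) * M) * ε := by
          apply mul_le_mul_of_nonneg_left hI3 (by positivity)
  have hεpow : ε ^ (2 * τ - 2 : ℝ) * ε = ε ^ (2 * τ - 1 : ℝ) := by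
    rw [show (2 * τ - 1 : ℝ) = (2 * τ - 2) + 1 by ring, Real.rpow_add hε0, Real.rpow_one]
  have hR0 : 0 ≤ (4 * 32 ^ (τ - 3 / 4) * 2 ^ (τ - 5 / 4) * (1 / (2 * τ - 3) + 2))
      * r ^ (3 / 2 - 2 * τ) + 4 * 4 ^ (2 * τ - 2) * ε ^ (2 * τ - 1) := by
    have h1 : 0 < 1 / (2 * τ - 3) + 2 := by positivity
    positivity
  calc (∫ z in ε..ε⁻¹, Φ z)
      = (∫ z in ε..(1:ℝ), Φ z) + ((∫ z in (1:ℝ)..(ε⁻¹ / 2), Φ z)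
        + ∫ z in (ε⁻¹ / 2)..ε⁻¹, Φ z) := hsplit
    _ ≤ (K * r ^ (3 / 2 - 2 * τ) * M) * (1 / (2 * τ - 3))
        + ((K * r ^ (3 / 2 - 2 * τ) * M) * 2
        + (4 * 4 ^ (2 * τ - 2) * ε ^ (2 * τ - 2) * M) * ε) :=
        add_le_add hS1 (add_le_add hS2 hS3)
    _ = M * ((K * (1 / (2 * τ - 3) + 2)) * r ^ (3 / 2 - 2 * τ)
        + 4 * 4 ^ (2 * τ - 2) * ε ^ (2 * τ - 1)) := by
        rw [← hεpow]; ring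
    _ ≤ (1 + 2 * ε * r) * ((K * (1 / (2 * τ - 3) + 2)) * r ^ (3 / 2 - 2 * τ)
        + 4 * 4 ^ (2 * τ - 2) * ε ^ (2 * τ - 1)) := by
        apply mul_le_mul_of_nonneg_right hM
        rw [hK_def]
        exact hR0
    _ = (1 + 2 * ε * r) *
        ((4 * 32 ^ (τ - 3 / 4) * 2 ^ (τ - 5 / 4) * (1 / (2 * τ - 3) + 2)) * r ^ (3 / 2 - 2 * τ)
          + 4 * 4 ^ (2 * τ - 2) * ε ^ (2 * τ - 1)) := by rw [hK_def]

/-- The slanted side face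
`S = {(ξ(z) cos(π/n), y, z) : |y| ≤ ξ(z) sin(π/n), z ∈ [ε, ε⁻¹]}`, with hyperbolic area
element `z⁻² √(1 + ε²ρ²/(1-ε²)²) dy dz`.  If `τ > 3/2`, `ρ(ε) → ∞` and
`ρ(ε) = o(ε^{-2τ})` as `ε → 0⁺`, then `∫_S cosh^{-2τ+1} r dσ̄ → 0`. -/
theorem side_face_estimate (τ : ℝ) (hτ : 3 / 2 < τ) (n : ℕ) (hn : 3 ≤ n)
    (ρ : ℝ → ℝ) (hρpos : ∀ ε > 0, 0 < ρ ε)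
    (hρtop : Tendsto ρ (𝓝[>] 0) atTop)
    (hρo : (fun ε => ρ ε) =o[𝓝[>] (0:ℝ)] (fun ε => ε ^ (-2 * τ))) :
    Tendsto (fun ε : ℝ =>
        ∫ z in ε..ε⁻¹,
          (∫ y in (-(edgeProfile ε (ρ ε) z * Real.sin (π / n)))..(edgeProfile ε (ρ ε) z * Real.sin (π / n)),
            (coshR (edgeProfile ε (ρ ε) z * Real.cos (π / n)) y z) ^ (-2 * τ + 1)) *
          (z ^ 2)⁻¹ * Real.sqrt (1 + ε ^ 2 * (ρ ε) ^ 2 / (1 - ε ^ 2) ^ 2))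
      (𝓝[>] 0) (𝓝 0) := by
  have hn3 : (3:ℝ) ≤ (n:ℝ) := by exact_mod_cast hn
  have hnpos : (0:ℝ) < (n:ℝ) := by linarith
  have hπn0 : 0 < π / n := div_pos pi_pos hnpos
  have hπn3 : π / n ≤ π / 3 := by
    rw [div_le_div_iff₀ hnpos (by norm_num)]
    nlinarith [pi_pos]
  have hπnπ : π / n ≤ π := by nlinarith [pi_pos]
  have hc : 1 / 2 ≤ Real.cos (π / n) := by
    rw [← Real.cos_pi_div_three]
    exact Real.cos_le_cos_of_nonneg_of_le_pi hπn0.le (by linarith [pi_pos]) hπn3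
  have hc1 : Real.cos (π / n) ≤ 1 := Real.cos_le_one _
  have hs0 : 0 ≤ Real.sin (π / n) := Real.sin_nonneg_of_nonneg_of_le_pi hπn0.le hπnπ
  have hs1 : Real.sin (π / n) ≤ 1 := Real.sin_le_one _
  have hev : ∀ᶠ ε in 𝓝[>] (0:ℝ), ε ∈ Set.Ioc (0:ℝ) (1/2) :=
    Ioc_mem_nhdsGT_of_mem ⟨le_rfl, by norm_num⟩
  have hρpos' : ∀ᶠ ε in 𝓝[>] (0:ℝ), 0 < ρ ε := by
    filter_upwards [self_mem_nhdsWithin] with ε hε using hρpos ε hε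
  -- the bounding function and its limit
  have hτ' : (0:ℝ) < 2 * τ - 3 / 2 := by linarith
  have hτ'' : (0:ℝ) < 2 * τ - 5 / 2 := by linarith
  have hT1 : Tendsto (fun ε => (ρ ε) ^ ((3:ℝ) / 2 - 2 * τ)) (𝓝[>] (0:ℝ)) (𝓝 0) := by
    have h := (tendsto_rpow_neg_atTop hτ').comp hρtop
    have heq : (fun ε => (ρ ε) ^ ((3:ℝ) / 2 - 2 * τ))
        = (fun x : ℝ => x ^ (-(2 * τ - 3 / 2))) ∘ ρ := by
      funext ε
      simp only [Function.comp_apply]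
      congr 1
      ring
    rw [heq]
    exact h
  have hT1' : Tendsto (fun ε => (ρ ε) ^ ((5:ℝ) / 2 - 2 * τ)) (𝓝[>] (0:ℝ)) (𝓝 0) := by
    have h := (tendsto_rpow_neg_atTop hτ'').comp hρtop
    have heq : (fun ε => (ρ ε) ^ ((5:ℝ) / 2 - 2 * τ))
        = (fun x : ℝ => x ^ (-(2 * τ - 5 / 2))) ∘ ρ := by
      funext ε
      simp only [Function.comp_apply]
      congr 1
      ring
    rw [heq]
    exact h
  have hεid : Tendsto (fun ε : ℝ => ε) (𝓝[>] (0:ℝ)) (𝓝 0) :=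
    tendsto_id.mono_left nhdsWithin_le_nhds
  have hT2 : Tendsto (fun ε : ℝ => ε ^ (2 * τ - 1)) (𝓝[>] (0:ℝ)) (𝓝 0) := by
    have hcont := (Real.continuousAt_rpow_const 0 (2 * τ - 1) (Or.inr (by linarith))).tendsto
    rw [Real.zero_rpow (ne_of_gt (by linarith : (0:ℝ) < 2 * τ - 1))] at hcont
    exact hcont.mono_left nhdsWithin_le_nhds
  have hT4 : Tendsto (fun ε => ρ ε * ε ^ (2 * τ)) (𝓝[>] (0:ℝ)) (𝓝 0) := by
    have h := hρo.tendsto_div_nhds_zero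
    apply h.congr'
    filter_upwards [self_mem_nhdsWithin] with ε hε
    rw [show (-2 * τ : ℝ) = -(2 * τ) by ring, Real.rpow_neg (le_of_lt hε), div_eq_mul_inv,
      inv_inv]
  have hTsum := (((hT1.const_mul ((4 * 32 ^ (τ - 3 / 4) * 2 ^ (τ - 5 / 4) * (1 / (2 * τ - 3) + 2)))).add
      (hT2.const_mul (4 * 4 ^ (2 * τ - 2)))).add
      (((hεid.mul hT1').const_mul (2 * (4 * 32 ^ (τ - 3 / 4) * 2 ^ (τ - 5 / 4) * (1 / (2 * τ - 3) + 2)))).add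
      (hT4.const_mul (2 * (4 * 4 ^ (2 * τ - 2))))))
  norm_num at hTsum
  have hB : Tendsto (fun ε : ℝ => (1 + 2 * ε * ρ ε) *
      ((4 * 32 ^ (τ - 3 / 4) * 2 ^ (τ - 5 / 4) * (1 / (2 * τ - 3) + 2)) * (ρ ε) ^ ((3:ℝ) / 2 - 2 * τ)
        + 4 * 4 ^ (2 * τ - 2) * ε ^ (2 * τ - 1))) (𝓝[>] (0:ℝ)) (𝓝 0) := by
    apply hTsum.congr'
    filter_upwards [self_mem_nhdsWithin] with ε hε
    have hrp : 0 < ρ ε := hρpos ε hε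
    have hεp : (0:ℝ) < ε := hε
    have h1 : ρ ε * (ρ ε) ^ ((3:ℝ) / 2 - 2 * τ) = (ρ ε) ^ ((5:ℝ) / 2 - 2 * τ) := by
      rw [show ((5:ℝ) / 2 - 2 * τ) = 1 + (3 / 2 - 2 * τ) by ring, Real.rpow_add hrp,
        Real.rpow_one]
    have h2 : ε * ε ^ (2 * τ - 1) = ε ^ (2 * τ) := by
      rw [mul_comm, ← Real.rpow_add_one hεp.ne' (2 * τ - 1)]
      congr 1
      ring
    rw [← h1, ← h2]
    ring
  apply squeeze_zero'
  · filter_upwards [hev, hρpos'] with ε hε hρε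
    exact main_nonneg hε.1 (by linarith [hε.2]) hρε hs0
  · filter_upwards [hev, hρpos'] with ε hε hρε
    exact main_bound hτ hc hc1 hs0 hs1 hε.1 hε.2 hρε
  · exact hB

end
end
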